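/- arXiv:1106.4266 — 8 statements merged into one kernel-verified Lean document; each statement's English description precedes it below -/
import Mathlib

section
/- Let O be a real Hilbert space, W a closed subspace of O, and P the orthogonal projection of O onto the orthogonal complement of W (so P has range W^⊥ and kernel W). For each n ∈ ℕ let W_n be a subspace of O, and assume the gaps δ(W_n, W) tend to 0 as n → ∞. Let (u_n) be a sequence in O converging to some u ∈ O, admitting decompositions u_n = v_n + w_n where w_n ∈ W_n and v_n is orthogonal to W_n in O. Assume moreover that dist((I − P)u, W_n) → 0 as n → ∞. Then v_n → Pu and w_n → (I − P)u in O. -/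
open Filter Topology RealInnerProductSpace

/-- The gap `δ(A, B) = sup_{a ∈ A, a ≠ 0} dist(a, B) / ‖a‖` between two subsets of a
normed space (equal to `0`, by convention on `sSup ∅`, when `A ⊆ {0}`). -/
noncomputable def subspaceGap {O : Type*} [NormedAddCommGroup O] (A B : Set O) : ℝ :=
  sSup ((fun a => Metric.infDist a B / ‖a‖) '' (A \ {0}))

/-- Splitting lemma: if `u_n = v_n + w_n → u` with `w_n ∈ W_n`,
`v_n ⊥ W_n`, the gaps `δ(W_n, W)` tend to `0`, and `dist((I−P)u, W_n) → 0`, then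
`v_n → P u` and `w_n → (I−P) u`. Here `P` is the orthogonal projection onto `Wᗮ`
with kernel the closed subspace `W`. -/
theorem stmt_0 {O : Type*} [NormedAddCommGroup O] [InnerProductSpace ℝ O] [CompleteSpace O]
    (W : Submodule ℝ O) (hWclosed : IsClosed (W : Set O))
    (P : O →L[ℝ] O) (hP : ∀ x : O, P x ∈ Wᗮ ∧ x - P x ∈ W)
    (Wn : ℕ → Submodule ℝ O)
    (hgap : Tendsto (fun n => subspaceGap ((Wn n : Set O)) (W : Set O)) atTop (𝓝 0))
    (u : O) (un vn wn : ℕ → O)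
    (hdecomp : ∀ n, un n = vn n + wn n)
    (hwn : ∀ n, wn n ∈ Wn n)
    (hvn : ∀ n, ∀ w ∈ Wn n, ⟪vn n, w⟫ = 0)
    (hconv : Tendsto un atTop (𝓝 u))
    (hdist : Tendsto (fun n => Metric.infDist (u - P u) ((Wn n : Set O))) atTop (𝓝 0)) :
    Tendsto vn atTop (𝓝 (P u)) ∧ Tendsto wn atTop (𝓝 (u - P u)) := by
  classical
  set q := u - P u with hq_def
  have hqW : q ∈ W := (hP u).2
  have hPuW : P u ∈ Wᗮ := (hP u).1
  -- nonnegativity of the gap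
  have hgap_nonneg : ∀ n, 0 ≤ subspaceGap ((Wn n : Set O)) (W : Set O) := by
    intro n
    apply Real.sSup_nonneg
    rintro r ⟨a, -, rfl⟩
    exact div_nonneg Metric.infDist_nonneg (norm_nonneg _)
  -- choose approximants qn n ∈ Wn n of q
  have hchoice : ∀ n : ℕ, ∃ y ∈ (Wn n : Set O),
      dist q y < Metric.infDist q ((Wn n : Set O)) + 1 / (n + 1) := by
    intro n
    have hne : ((Wn n : Set O)).Nonempty := ⟨0, (Wn n).zero_mem⟩
    have hlt : Metric.infDist q ((Wn n : Set O)) <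
        Metric.infDist q ((Wn n : Set O)) + 1 / (n + 1) := by
      have : (0 : ℝ) < 1 / (n + 1) := by positivity
      linarith
    exact (Metric.infDist_lt_iff hne).1 hlt
  choose qn hqnmem hqndist using hchoice
  have hqn_norm : Tendsto (fun n => ‖q - qn n‖) atTop (𝓝 0) := by
    have h1 : Tendsto (fun n : ℕ => (1 : ℝ) / (n + 1)) atTop (𝓝 0) :=
      tendsto_one_div_add_atTop_nhds_zero_nat
    refine squeeze_zero (g := fun n => Metric.infDist q ((Wn n : Set O)) + 1 / (n + 1))
      (fun n => norm_nonneg _) (fun n => ?_) (by simpa using hdist.add h1)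
    rw [← dist_eq_norm]
    exact (hqndist n).le
  have hqn_tendsto : Tendsto qn atTop (𝓝 q) := by
    rw [tendsto_iff_norm_sub_tendsto_zero]
    simpa [norm_sub_rev] using hqn_norm
  -- gap bound: infDist x W ≤ δn * ‖x‖ for x ∈ Wn n
  have hGapBound : ∀ n, ∀ x ∈ Wn n,
      Metric.infDist x (W : Set O) ≤ subspaceGap ((Wn n : Set O)) (W : Set O) * ‖x‖ := by
    intro n x hx
    rcases eq_or_ne x 0 with rfl | hx0
    · simp [Metric.infDist_zero_of_mem W.zero_mem]
    · have hbdd : BddAbove ((fun a => Metric.infDist a (W : Set O) / ‖a‖) ''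
          (((Wn n : Set O)) \ {0})) := by
        refine ⟨1, ?_⟩
        rintro r ⟨a, ⟨-, ha0⟩, rfl⟩
        have ha0' : a ≠ 0 := by simpa using ha0
        have hle : Metric.infDist a (W : Set O) ≤ ‖a‖ := by
          have := Metric.infDist_le_dist_of_mem (x := a) W.zero_mem
          simpa [dist_eq_norm] using this
        exact div_le_one_of_le₀ hle (norm_nonneg _)
      have hmem : Metric.infDist x (W : Set O) / ‖x‖ ∈
          ((fun a => Metric.infDist a (W : Set O) / ‖a‖) '' (((Wn n : Set O)) \ {0})) :=
        ⟨x, ⟨hx, by simpa using hx0⟩, rfl⟩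
      have hsup := le_csSup hbdd hmem
      have hxpos : (0 : ℝ) < ‖x‖ := norm_pos_iff.2 hx0
      rw [div_le_iff₀ hxpos] at hsup
      exact hsup
  -- orthogonality bound: |⟪P u, x⟫| ≤ ‖P u‖ * infDist x W
  have hPuBound : ∀ x : O, |⟪P u, x⟫| ≤ ‖P u‖ * Metric.infDist x (W : Set O) := by
    intro x
    rcases eq_or_ne (P u) 0 with h0 | h0
    · simp [h0]
    · have hpos : (0 : ℝ) < ‖P u‖ := norm_pos_iff.2 h0
      rw [mul_comm, ← div_le_iff₀ hpos]
      haveI : Nonempty (W : Set O) := ⟨0, W.zero_mem⟩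
      rw [Metric.infDist_eq_iInf]
      refine le_ciInf ?_
      rintro ⟨w, hw⟩
      simp only
      rw [div_le_iff₀ hpos]
      have hzero : ⟪P u, w⟫ = 0 := by
        have := hPuW w hw
        rwa [real_inner_comm] at this
      have : ⟪P u, x⟫ = ⟪P u, x - w⟫ := by rw [inner_sub_right, hzero, sub_zero]
      calc |⟪P u, x⟫| = |⟪P u, x - w⟫| := by rw [this]
        _ ≤ ‖P u‖ * ‖x - w‖ := abs_real_inner_le_norm _ _
        _ = dist x w * ‖P u‖ := by rw [dist_eq_norm, mul_comm]
  -- key estimate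
  have hkey : ∀ n, ‖wn n - qn n‖ ≤
      ‖P u‖ * subspaceGap ((Wn n : Set O)) (W : Set O) + ‖un n - qn n - P u‖ := by
    intro n
    set x := wn n - qn n with hx_def
    have hxmem : x ∈ Wn n := Submodule.sub_mem _ (hwn n) (hqnmem n)
    have hv : ⟪vn n, x⟫ = 0 := hvn n x hxmem
    have hinner : ⟪x, x⟫ = ⟪un n - qn n, x⟫ := by
      have heq : un n - qn n = vn n + x := by rw [hdecomp n, hx_def]; abel
      rw [heq, inner_add_left, hv, zero_add]
    have hsplit : ⟪x, x⟫ = ⟪P u, x⟫ + ⟪un n - qn n - P u, x⟫ := by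
      rw [hinner]
      simp only [inner_sub_left]
      ring
    have hmain : ‖x‖ * ‖x‖ ≤
        (‖P u‖ * subspaceGap ((Wn n : Set O)) (W : Set O) + ‖un n - qn n - P u‖) * ‖x‖ := by
      calc ‖x‖ * ‖x‖ = ⟪x, x⟫ := (real_inner_self_eq_norm_mul_norm x).symm
        _ = ⟪P u, x⟫ + ⟪un n - qn n - P u, x⟫ := hsplit
        _ ≤ |⟪P u, x⟫| + |⟪un n - qn n - P u, x⟫| := by
            exact add_le_add (le_abs_self _) (le_abs_self _)
        _ ≤ ‖P u‖ * Metric.infDist x (W : Set O) + ‖un n - qn n - P u‖ * ‖x‖ := by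
            exact add_le_add (hPuBound x) (abs_real_inner_le_norm _ _)
        _ ≤ ‖P u‖ * (subspaceGap ((Wn n : Set O)) (W : Set O) * ‖x‖)
              + ‖un n - qn n - P u‖ * ‖x‖ := by
            gcongr
            exact hGapBound n x hxmem
        _ = (‖P u‖ * subspaceGap ((Wn n : Set O)) (W : Set O)
              + ‖un n - qn n - P u‖) * ‖x‖ := by ring
    rcases eq_or_ne x 0 with hx0 | hx0
    · rw [hx0, norm_zero]
      have h1 : 0 ≤ ‖P u‖ * subspaceGap ((Wn n : Set O)) (W : Set O) :=
        mul_nonneg (norm_nonneg _) (hgap_nonneg n)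
      have h2 : 0 ≤ ‖un n - qn n - P u‖ := norm_nonneg _
      linarith
    · exact le_of_mul_le_mul_right hmain (norm_pos_iff.2 hx0)
  -- limit of the error term
  have herr : Tendsto (fun n => ‖un n - qn n - P u‖) atTop (𝓝 0) := by
    have h1 : Tendsto (fun n => un n - qn n - P u) atTop (𝓝 (u - q - P u)) :=
      (hconv.sub hqn_tendsto).sub_const (P u)
    have h2 : u - q - P u = 0 := by rw [hq_def]; abel
    rw [h2] at h1
    simpa using h1.norm
  -- wn tends to q
  have hwq : Tendsto wn atTop (𝓝 q) := by
    rw [tendsto_iff_norm_sub_tendsto_zero]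
    apply squeeze_zero (fun n => norm_nonneg _)
      (fun n => (norm_sub_le_norm_sub_add_norm_sub (wn n) (qn n) q))
    have hA : Tendsto (fun n => ‖wn n - qn n‖) atTop (𝓝 0) := by
      apply squeeze_zero (fun n => norm_nonneg _) hkey
      have := (hgap.const_mul (‖P u‖)).add herr
      simpa using this
    have hB : Tendsto (fun n => ‖qn n - q‖) atTop (𝓝 0) := by
      simpa [norm_sub_rev] using hqn_norm
    simpa using hA.add hB
  refine ⟨?_, hwq⟩
  have hvq : Tendsto (fun n => un n - wn n) atTop (𝓝 (u - q)) := hconv.sub hwq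
  have h2 : u - q = P u := by rw [hq_def]; abel
  rw [h2] at hvq
  refine hvq.congr fun n => ?_
  rw [hdecomp n]; abel
end

section
/- Let O be a real Hilbert space, W a closed subspace of O, and P the orthogonal projection of O onto W^⊥ (kernel W). Let X⁻ be a real Banach space and ι : X⁻ → O an injective continuous linear map, and assume the composition P ∘ ι : X⁻ → O is a compact operator. For each n ∈ ℕ let X_n be a finite-dimensional subspace of X⁻, let W_n be a subspace of X_n, and let V_n = {u ∈ X_n : ⟨ιu, ιw⟩ = 0 for all w ∈ W_n}. Assume: (a) there are linear maps Q_n : O → O, uniformly bounded in operator norm, with Q_n x = x for all x ∈ ι(X_n), Q_n(range) ⊆ ι(X_n), Q_n y → y for every y ∈ O, and Q_n(W) ⊆ ι(W_n); (b) δ(ι(W_n), W) → 0 as n → ∞. Then there is a sequence ε_n → 0 such that for all n and all u ∈ V_n: ‖ιu − P(ιu)‖_O ≤ ε_n ‖u‖_{X⁻}. -/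
/-! For `x = ι u` put `y = P x`, so that `x - y ∈ W` and `y ⊥ W`. Since `Q_n` fixes `x` and maps
`x - y ∈ W` into `ι(W_n) ⊥ x`,
`‖x - y‖² = ⟪x, (x - y) - Q_n (x - y)⟫ = ⟪x, Q_n y - y⟫ ≤ ‖x‖ ‖y - Q_n y‖`.
Uniformly bounded operators converging pointwise to the identity converge uniformly on compact
sets, so `‖P ∘ ι - Q_n ∘ P ∘ ι‖ → 0` because `P ∘ ι` is compact, and
`ε_n = √(‖ι‖ ‖P ∘ ι - Q_n ∘ P ∘ ι‖)` works. -/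

open Filter Topology RealInnerProductSpace Set

theorem sq_norm_sub_le_norm_mul_norm_sub_apply {O : Type*} [NormedAddCommGroup O]
    [InnerProductSpace ℝ O] {x y : O} (hxy : ⟪x - y, y⟫ = 0) {T : O →ₗ[ℝ] O}
    (hTx : T x = x) (hT : ⟪x, T (x - y)⟫ = 0) :
    ‖x - y‖ ^ 2 ≤ ‖x‖ * ‖y - T y‖ := by
  have hsub : x - y - T (x - y) = T y - y := by
    rw [map_sub, hTx]
    abel
  calc ‖x - y‖ ^ 2 = ⟪x, x - y - T (x - y)⟫ := by
        rw [inner_sub_right, hT, ← real_inner_self_eq_norm_sq, inner_sub_left x y,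
          real_inner_comm (x - y) y, hxy]
    _ = ⟪x, T y - y⟫ := by rw [hsub]
    _ ≤ ‖x‖ * ‖y - T y‖ := by
        rw [norm_sub_rev]
        exact real_inner_le_norm _ _

theorem ContinuousLinearMap.tendstoUniformlyOn_of_norm_le {𝕜 E F ι : Type*}
    [NontriviallyNormedField 𝕜] [NormedAddCommGroup E] [NormedSpace 𝕜 E]
    [NormedAddCommGroup F] [NormedSpace 𝕜 F] {l : Filter ι} {C : ℝ} {f : ι → E →L[𝕜] F}
    (hf : ∀ i, ‖f i‖ ≤ C) {g : E → F} (hg : ∀ x, Tendsto (fun i => f i x) l (𝓝 (g x)))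
    {K : Set E} (hK : IsCompact K) :
    TendstoUniformlyOn (fun i => ⇑(f i)) g l K := by
  have : CompactSpace K := isCompact_iff_compactSpace.mp hK
  have hbdd : BddAbove (range fun i => ‖f i‖) := ⟨C, forall_mem_range.mpr hf⟩
  have hequi : Equicontinuous fun i => ⇑(f i) :=
    ((NormedSpace.equicontinuous_TFAE f).out 7 1).mp hbdd
  rw [tendstoUniformlyOn_iff_tendstoUniformly_comp_coe]
  refine UniformFun.tendsto_iff_tendstoUniformly.mp <|
    (((equicontinuous_restrict_iff _).mpr (hequi.equicontinuousOn K)).tendsto_uniformFun_iff_pi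
      _ _).mpr ?_
  exact tendsto_pi_nhds.mpr fun x => hg x

theorem IsCompactOperator.tendsto_norm_sub_comp {𝕜 E F ι : Type*} [DenselyNormedField 𝕜]
    [NormedAddCommGroup E] [NormedSpace 𝕜 E] [NormedAddCommGroup F] [NormedSpace 𝕜 F]
    {l : Filter ι} {C : ℝ} {T : E →L[𝕜] F} (hT : IsCompactOperator T)
    {Q : ι → F →L[𝕜] F} (hQ : ∀ i, ‖Q i‖ ≤ C) (hconv : ∀ y, Tendsto (fun i => Q i y) l (𝓝 y)) :
    Tendsto (fun i => ‖T - (Q i).comp T‖) l (𝓝 0) := by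
  obtain ⟨K, hK, hTK⟩ := hT.image_ball_subset_compact 1
  have hunif := Metric.tendstoUniformlyOn_iff.mp
    (ContinuousLinearMap.tendstoUniformlyOn_of_norm_le hQ hconv hK)
  rw [Metric.tendsto_nhds]
  intro ε hε
  filter_upwards [hunif (ε / 2) (half_pos hε)] with i hi
  rw [Real.dist_0_eq_abs, abs_norm]
  refine lt_of_le_of_lt (not_lt.mp fun hlt => ?_) (half_lt_self hε)
  obtain ⟨x, hx, hεx⟩ := (T - (Q i).comp T).exists_lt_apply_of_lt_opNorm hlt
  have hTx : T x ∈ K := hTK ⟨x, mem_ball_zero_iff.mpr hx, rfl⟩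
  exact hεx.not_gt (by simpa [dist_eq_norm] using hi (T x) hTx)

theorem stmt_1_general {O Xm : Type*}
    [NormedAddCommGroup O] [InnerProductSpace ℝ O]
    [NormedAddCommGroup Xm] [NormedSpace ℝ Xm]
    (W : Submodule ℝ O)
    (P : O →L[ℝ] O) (hP : ∀ x : O, P x ∈ Wᗮ ∧ x - P x ∈ W)
    (ι : Xm →L[ℝ] O)
    (hcomp : IsCompactOperator (P.comp ι))
    (Xn : ℕ → Submodule ℝ Xm)
    (Wn : ℕ → Submodule ℝ Xm)
    (Q : ℕ → O →L[ℝ] O) (C : ℝ) (hQbdd : ∀ n, ‖Q n‖ ≤ C)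
    (hQfix : ∀ n, ∀ x ∈ Submodule.map (ι : Xm →ₗ[ℝ] O) (Xn n), Q n x = x)
    (hQconv : ∀ y : O, Tendsto (fun n => Q n y) atTop (𝓝 y))
    (hQW : ∀ n, ∀ w ∈ W, Q n w ∈ Submodule.map (ι : Xm →ₗ[ℝ] O) (Wn n)) :
    ∃ ε : ℕ → ℝ, Tendsto ε atTop (𝓝 0) ∧
      ∀ n, ∀ u ∈ Xn n, (∀ w ∈ Wn n, ⟪ι u, ι w⟫ = 0) →
        ‖ι u - P (ι u)‖ ≤ ε n * ‖u‖ := by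
  set M : ℕ → ℝ := fun n => ‖P.comp ι - (Q n).comp (P.comp ι)‖
  have hM : Tendsto M atTop (𝓝 0) := hcomp.tendsto_norm_sub_comp hQbdd hQconv
  refine ⟨fun n => √(‖ι‖ * M n), ?_, fun n u hu horth => ?_⟩
  · simpa using ((hM.const_mul ‖ι‖).sqrt)
  obtain ⟨hPW, hsubW⟩ := hP (ι u)
  have hsq : ‖ι u - P (ι u)‖ ^ 2 ≤ (‖ι‖ * M n) * ‖u‖ ^ 2 := by
    have hfix : Q n (ι u) = ι u := hQfix n _ ⟨u, hu, rfl⟩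
    have horthQ : ⟪ι u, Q n (ι u - P (ι u))⟫ = 0 := by
      obtain ⟨v, hv, hvQ⟩ := hQW n _ hsubW
      rw [← hvQ]
      exact horth v hv
    have hM_apply : ‖P (ι u) - Q n (P (ι u))‖ ≤ M n * ‖u‖ :=
      (P.comp ι - (Q n).comp (P.comp ι)).le_opNorm u
    calc ‖ι u - P (ι u)‖ ^ 2 ≤ ‖ι u‖ * ‖P (ι u) - Q n (P (ι u))‖ :=
          sq_norm_sub_le_norm_mul_norm_sub_apply (T := (Q n : O →ₗ[ℝ] O))
            (Submodule.inner_right_of_mem_orthogonal hsubW hPW) hfix horthQ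
      _ ≤ (‖ι‖ * ‖u‖) * (M n * ‖u‖) :=
          mul_le_mul (ι.le_opNorm u) hM_apply (norm_nonneg _) (by positivity)
      _ = (‖ι‖ * M n) * ‖u‖ ^ 2 := by ring
  calc ‖ι u - P (ι u)‖ ≤ √((‖ι‖ * M n) * ‖u‖ ^ 2) := Real.le_sqrt_of_sq_le hsq
    _ = √(‖ι‖ * M n) * ‖u‖ := by rw [Real.sqrt_mul' _ (sq_nonneg _), Real.sqrt_sq (norm_nonneg _)]

/-- Gap estimate for the discrete spaces: with `P` the orthogonal
projection onto `Wᗮ` (kernel `W`), `P ∘ ι` compact, uniformly bounded projections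
`Q_n` onto `ι(X_n)` converging pointwise to the identity and mapping `W` into
`ι(W_n)`, and `δ(ι(W_n), W) → 0`, there is `ε_n → 0` with
`‖ι u − P (ι u)‖ ≤ ε_n ‖u‖` for all `u ∈ V_n`. -/
theorem stmt_1 {O Xm : Type*}
    [NormedAddCommGroup O] [InnerProductSpace ℝ O] [CompleteSpace O]
    [NormedAddCommGroup Xm] [NormedSpace ℝ Xm] [CompleteSpace Xm]
    (W : Submodule ℝ O) (hWclosed : IsClosed (W : Set O))
    (P : O →L[ℝ] O) (hP : ∀ x : O, P x ∈ Wᗮ ∧ x - P x ∈ W)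
    (ι : Xm →L[ℝ] O) (hι : Function.Injective ι)
    (hcomp : IsCompactOperator (P.comp ι))
    (Xn : ℕ → Submodule ℝ Xm) (hfd : ∀ n, FiniteDimensional ℝ (Xn n))
    (Wn : ℕ → Submodule ℝ Xm) (hWn : ∀ n, Wn n ≤ Xn n)
    (Q : ℕ → O →L[ℝ] O) (C : ℝ) (hQbdd : ∀ n, ‖Q n‖ ≤ C)
    (hQfix : ∀ n, ∀ x ∈ Submodule.map (ι : Xm →ₗ[ℝ] O) (Xn n), Q n x = x)
    (hQrange : ∀ n, ∀ y : O, Q n y ∈ Submodule.map (ι : Xm →ₗ[ℝ] O) (Xn n))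
    (hQconv : ∀ y : O, Tendsto (fun n => Q n y) atTop (𝓝 y))
    (hQW : ∀ n, ∀ w ∈ W, Q n w ∈ Submodule.map (ι : Xm →ₗ[ℝ] O) (Wn n))
    (hgap : Tendsto
      (fun n => subspaceGap ((Submodule.map (ι : Xm →ₗ[ℝ] O) (Wn n) : Set O)) (W : Set O))
      atTop (𝓝 0)) :
    ∃ ε : ℕ → ℝ, Tendsto ε atTop (𝓝 0) ∧
      ∀ n, ∀ u ∈ Xn n, (∀ w ∈ Wn n, ⟪ι u, ι w⟫ = 0) →
        ‖ι u - P (ι u)‖ ≤ ε n * ‖u‖ :=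
  stmt_1_general W P hP ι hcomp Xn Wn Q C hQbdd hQfix hQconv hQW
end

section
/- Let E and F be real normed spaces, T : E → F a compact bounded linear operator, and (S_n) a sequence of bounded linear operators F → F with sup_n ‖S_n‖ < ∞ and S_n y → 0 for every y ∈ F. Then ‖S_n ∘ T‖ → 0 in operator norm as n → ∞. -/
open Filter Topology

/-- If `T : E → F` is a compact bounded operator and `(S n)` is a
uniformly bounded sequence of operators on `F` converging pointwise to `0`, then
`S n ∘ T → 0` in operator norm. -/
theorem stmt_2 {E F : Type*} [NormedAddCommGroup E] [NormedSpace ℝ E]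
    [NormedAddCommGroup F] [NormedSpace ℝ F]
    (T : E →L[ℝ] F) (hT : IsCompactOperator T)
    (S : ℕ → F →L[ℝ] F) (C : ℝ) (hC : ∀ n, ‖S n‖ ≤ C)
    (hS : ∀ y : F, Tendsto (fun n => S n y) atTop (𝓝 0)) :
    Tendsto (fun n => ‖(S n).comp T‖) atTop (𝓝 0) := by
  have hC0 : 0 ≤ C := le_trans (norm_nonneg _) (hC 0)
  rw [Metric.tendsto_atTop]
  intro ε hε
  -- choose δ
  set δ : ℝ := ε / (4 * (C + 1)) with hδdef
  have hδ : 0 < δ := by positivity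
  -- total boundedness of T '' closedBall 0 1
  have hT' : IsCompactOperator (T : E →ₗ[ℝ] F) := hT
  have hK : IsCompact (closure ((T : E →ₗ[ℝ] F) '' Metric.closedBall 0 1)) :=
    hT'.isCompact_closure_image_closedBall (𝕜₁ := ℝ) 1
  simp only [ContinuousLinearMap.coe_coe] at hK
  have htb : TotallyBounded (T '' Metric.closedBall 0 1) :=
    (hK.totallyBounded).subset subset_closure
  obtain ⟨t, htfin, hcov⟩ := Metric.totallyBounded_iff.mp htb δ hδ
  -- eventually all points of t are small
  have hev : ∀ᶠ n in atTop, ∀ y ∈ t, ‖S n y‖ < ε / 4 := by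
    rw [Filter.eventually_all_finite htfin]
    intro y _
    have := (hS y).norm
    rw [norm_zero] at this
    exact (this.eventually_lt_const (by positivity))
  obtain ⟨N, hN⟩ := Filter.eventually_atTop.mp hev
  refine ⟨N, fun n hn => ?_⟩
  have hsmall := hN n hn
  have hbound : ‖(S n).comp T‖ ≤ ε / 2 := by
    refine ContinuousLinearMap.opNorm_le_of_unit_norm (by positivity) fun x hx => ?_
    have hxball : T x ∈ T '' Metric.closedBall 0 1 :=
      ⟨x, by simp [hx], rfl⟩
    obtain ⟨y, hy, hxy⟩ := Set.mem_iUnion₂.mp (hcov hxball)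
    have h1 : ‖S n (T x) - S n y‖ ≤ C * δ := by
      rw [← map_sub]
      calc ‖S n (T x - y)‖ ≤ ‖S n‖ * ‖T x - y‖ := (S n).le_opNorm _
        _ ≤ C * δ := by
            apply mul_le_mul (hC n) _ (norm_nonneg _) hC0
            exact le_of_lt (by rwa [← dist_eq_norm] )
    have h2 : ‖S n y‖ < ε / 4 := hsmall y hy
    have hCδ : C * δ ≤ ε / 4 := by
      rw [hδdef]
      rw [mul_div_assoc']
      rw [div_le_div_iff₀ (by positivity) (by positivity)]
      nlinarith
    calc ‖(S n).comp T x‖ = ‖(S n (T x) - S n y) + S n y‖ := by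
          simp [ContinuousLinearMap.comp_apply]
      _ ≤ ‖S n (T x) - S n y‖ + ‖S n y‖ := norm_add_le _ _
      _ ≤ ε / 4 + ε / 4 := add_le_add (h1.trans hCδ) h2.le
      _ = ε / 2 := by ring
  calc dist ‖(S n).comp T‖ 0 = ‖(S n).comp T‖ := by
        simp [Real.dist_eq, abs_of_nonneg (norm_nonneg _)]
    _ ≤ ε / 2 := hbound
    _ < ε := by linarith
end

section
/- Let O be a real Hilbert space, W a closed subspace of O, and P the orthogonal projection of O onto W^⊥ (kernel W). Let X⁻ be a real normed space with an injective continuous linear map ι : X⁻ → O, let V_n be a finite-dimensional subspace of X⁻, and let a_n be a bilinear form on V_n. Assume: (a) discrete inf-sup: there is C > 0 with ‖ιu‖_O ≤ C sup_{v ∈ V_n, v ≠ 0} |a_n(u,v)|/‖v‖_{X⁻} for all u ∈ V_n; (b) gap estimate: there is ε > 0 with ‖ιv − P(ιv)‖_O ≤ ε ‖v‖_{X⁻} for all v ∈ V_n. Let K_n : W → V_n satisfy a_n(K_n u, v) = ⟨u, ιv⟩_O for all u ∈ W and v ∈ V_n. Then for every u ∈ W: ‖ι(K_n u)‖_O ≤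 C ε ‖u‖_O. -/
open Filter Topology RealInnerProductSpace

/-- Discrete inf-sup plus a gap estimate imply the bound
`‖ι (K_n u)‖ ≤ C ε ‖u‖` for the discrete solution operator on the kernel `W`.
Here `P` is the orthogonal projection onto `Wᗮ` with kernel `W`, and the inf-sup
hypothesis (a) is stated as: `C` times any upper bound of
`v ↦ |a_n(u,v)|/‖v‖` on `V_n` bounds `‖ι u‖`. -/
theorem stmt_4 {O Xm : Type*}
    [NormedAddCommGroup O] [InnerProductSpace ℝ O] [CompleteSpace O]
    [NormedAddCommGroup Xm] [NormedSpace ℝ Xm]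
    (W : Submodule ℝ O) (hWclosed : IsClosed (W : Set O))
    (P : O →L[ℝ] O) (hP : ∀ x : O, P x ∈ Wᗮ ∧ x - P x ∈ W)
    (ι : Xm →L[ℝ] O) (hι : Function.Injective ι)
    (Vn : Submodule ℝ Xm) (hfd : FiniteDimensional ℝ Vn)
    (an : Xm →ₗ[ℝ] Xm →ₗ[ℝ] ℝ)
    (C : ℝ) (hC : 0 < C)
    (hinfsup : ∀ u ∈ Vn, ∀ D : ℝ, 0 ≤ D →
      (∀ v ∈ Vn, |an u v| ≤ D * ‖v‖) → ‖ι u‖ ≤ C * D)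
    (ε : ℝ) (hε : 0 < ε)
    (hgap : ∀ v ∈ Vn, ‖ι v - P (ι v)‖ ≤ ε * ‖v‖)
    (Kn : W → Xm)
    (hKnmem : ∀ u : W, Kn u ∈ Vn)
    (hKn : ∀ (u : W), ∀ v ∈ Vn, an (Kn u) v = ⟪(u : O), ι v⟫) :
    ∀ u : W, ‖ι (Kn u)‖ ≤ C * ε * ‖(u : O)‖ := by
  intro u
  have key : ∀ v ∈ Vn, |an (Kn u) v| ≤ (ε * ‖(u : O)‖) * ‖v‖ := by
    intro v hv
    have h1 : an (Kn u) v = ⟪(u : O), ι v - P (ι v)⟫ := by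
      rw [hKn u v hv, inner_sub_right]
      have : ⟪(u : O), P (ι v)⟫ = 0 :=
        ((hP (ι v)).1 (u : O) u.2)
      simp [this]
    rw [h1]
    calc |⟪(u : O), ι v - P (ι v)⟫| ≤ ‖(u : O)‖ * ‖ι v - P (ι v)‖ :=
          abs_real_inner_le_norm _ _
      _ ≤ ‖(u : O)‖ * (ε * ‖v‖) := by
          apply mul_le_mul_of_nonneg_left (hgap v hv) (norm_nonneg _)
      _ = (ε * ‖(u : O)‖) * ‖v‖ := by ring
  have := hinfsup (Kn u) (hKnmem u) (ε * ‖(u : O)‖)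
    (mul_nonneg hε.le (norm_nonneg _)) key
  linarith [this]
end

section
/- Let O be a real Hilbert space, X a real Hilbert space, and ι : X → O an injective continuous linear map with dense range. Let a : X × X → ℝ be a bounded symmetric bilinear form. Set W = {u ∈ X : a(u,v) = 0 for all v ∈ X} and V = {u ∈ X : ⟨ιu, ιw⟩_O = 0 for all w ∈ W}. Assume ι(W) is closed in O, the restriction of ι to V is a compact operator V → O, and there is c > 0 such that for every u ∈ V, sup_{v ∈ V, v ≠ 0} |a(u,v)|/‖v‖_X ≥ c ‖u‖_X. Suppose K : O → O is a map such that for every u ∈ O there exists k_u ∈ V with K u = ι(k_u) and a(k_u, w) = ⟨u, ιw⟩_O for all w ∈ V. Then K is a bounded linear operator on O which is selfadjoint (⟨Ku, u'⟩_O = ⟨u, Ku'⟩_O for all u, u' ∈ O) and compact. -/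
open Filter Topology RealInnerProductSpace

/-- The solution operator `K` of the variational problem
`a(k_u, w) = ⟨u, ιw⟩ (w ∈ V)`, `K u = ι k_u` with `k_u ∈ V`, is a bounded linear,
selfadjoint and compact operator on `O`. The inf-sup hypothesis
`sup_{v ∈ V, v ≠ 0} |a(u,v)|/‖v‖ ≥ c ‖u‖` is stated as: for every `b < c ‖u‖` some
`v ∈ V, v ≠ 0` satisfies `b ‖v‖ < |a(u,v)|`. -/
theorem stmt_5 {O X : Type*}
    [NormedAddCommGroup O] [InnerProductSpace ℝ O] [CompleteSpace O]
    [NormedAddCommGroup X] [InnerProductSpace ℝ X] [CompleteSpace X]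
    (ι : X →L[ℝ] O) (hι : Function.Injective ι) (hdense : DenseRange ι)
    (a : X →L[ℝ] X →L[ℝ] ℝ) (hsym : ∀ u v : X, a u v = a v u)
    (W : Submodule ℝ X) (hW : ∀ u : X, u ∈ W ↔ ∀ v : X, a u v = 0)
    (V : Submodule ℝ X) (hV : ∀ u : X, u ∈ V ↔ ∀ w ∈ W, ⟪ι u, ι w⟫ = 0)
    (hWclosed : IsClosed (ι '' (W : Set X)))
    (hVcompact : IsCompactOperator (fun v : V => ι (v : X)))
    (c : ℝ) (hc : 0 < c)
    (hinfsup : ∀ u ∈ V, ∀ b : ℝ, b < c * ‖u‖ →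
      ∃ v ∈ V, v ≠ 0 ∧ b * ‖v‖ < |a u v|)
    (K : O → O)
    (hK : ∀ u : O, ∃ k : X, k ∈ V ∧ K u = ι k ∧ ∀ w ∈ V, a k w = ⟪u, ι w⟫) :
    IsLinearMap ℝ K ∧ Continuous K ∧
      (∀ u u' : O, ⟪K u, u'⟫ = ⟪u, K u'⟫) ∧ IsCompactOperator K := by
  classical
  choose k hkV hKk hka using hK
  -- if u ∈ V and a u v = 0 for all v ∈ V then u = 0
  have hzero : ∀ u ∈ V, (∀ v ∈ V, a u v = 0) → u = 0 := by
    intro u hu h0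
    by_contra hne
    have hnorm : 0 < ‖u‖ := norm_pos_iff.mpr hne
    obtain ⟨v, hvV, hv0, hlt⟩ := hinfsup u hu (c * ‖u‖ / 2) (by nlinarith)
    have hvnorm : 0 < ‖v‖ := norm_pos_iff.mpr hv0
    rw [h0 v hvV, abs_zero] at hlt
    have : 0 < c * ‖u‖ / 2 * ‖v‖ :=
      mul_pos (div_pos (mul_pos hc hnorm) two_pos) hvnorm
    linarith
  -- uniqueness of solutions
  have huniq : ∀ (u : O) (k' : X), k' ∈ V → (∀ w ∈ V, a k' w = ⟪u, ι w⟫) →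
      k' = k u := by
    intro u k' hk' hk'a
    have h := hzero (k' - k u) (V.sub_mem hk' (hkV u)) (fun v hv => by
      simp [map_sub, ContinuousLinearMap.sub_apply, hk'a v hv, hka u v hv])
    exact sub_eq_zero.mp h
  have hadd : ∀ u u' : O, k (u + u') = k u + k u' := by
    intro u u'
    refine (huniq (u + u') (k u + k u') (V.add_mem (hkV u) (hkV u')) ?_).symm
    intro w hw
    simp [map_add, ContinuousLinearMap.add_apply, hka u w hw, hka u' w hw,
      inner_add_left]
  have hsmul : ∀ (r : ℝ) (u : O), k (r • u) = r • k u := by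
    intro r u
    refine (huniq (r • u) (r • k u) (V.smul_mem r (hkV u)) ?_).symm
    intro w hw
    simp [map_smul, ContinuousLinearMap.smul_apply, hka u w hw,
      real_inner_smul_left]
  have hbound : ∀ u : O, c * ‖k u‖ ≤ ‖ι‖ * ‖u‖ := by
    intro u
    by_contra h
    push_neg at h
    obtain ⟨v, hvV, hv0, hlt⟩ := hinfsup (k u) (hkV u) (‖ι‖ * ‖u‖) h
    rw [hka u v hvV] at hlt
    have h1 : |⟪u, ι v⟫| ≤ ‖u‖ * ‖ι v‖ := abs_real_inner_le_norm u (ι v)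
    have h2 : ‖ι v‖ ≤ ‖ι‖ * ‖v‖ := ι.le_opNorm v
    nlinarith [norm_nonneg u, norm_nonneg v]
  have hklin : IsLinearMap ℝ K :=
    ⟨fun u u' => by rw [hKk, hKk, hKk, hadd, map_add],
     fun r u => by rw [hKk, hKk, hsmul, map_smul]⟩
  have hKb : ∀ u : O, ‖K u‖ ≤ (‖ι‖ * ‖ι‖ / c) * ‖u‖ := by
    intro u
    rw [hKk u]
    calc ‖ι (k u)‖ ≤ ‖ι‖ * ‖k u‖ := ι.le_opNorm (k u)
      _ ≤ (‖ι‖ * ‖ι‖ / c) * ‖u‖ := by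
          rcases le_or_gt ‖ι‖ 0 with hι0 | hι0
          · have h0 : ‖ι‖ = 0 := le_antisymm hι0 (norm_nonneg _)
            have hb := hbound u
            rw [h0, zero_mul] at hb
            have hk0 : ‖k u‖ = 0 := le_antisymm (by nlinarith) (norm_nonneg _)
            simp [h0, hk0]
          · rw [div_mul_eq_mul_div, le_div_iff₀ hc]
            have := hbound u
            nlinarith [norm_nonneg u]
  have hcont : Continuous K :=
    ((IsLinearMap.mk' K hklin).mkContinuous (‖ι‖ * ‖ι‖ / c) hKb).continuous
  have hsa : ∀ u u' : O, ⟪K u, u'⟫ = ⟪u, K u'⟫ := by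
    intro u u'
    rw [hKk u, hKk u', real_inner_comm, ← hka u' (k u) (hkV u),
      hsym (k u') (k u), hka u (k u') (hkV u')]
  -- compactness
  let T : O →ₗ[ℝ] V :=
    { toFun := fun u => ⟨k u, hkV u⟩
      map_add' := fun u u' => Subtype.ext (hadd u u')
      map_smul' := fun r u => Subtype.ext (hsmul r u) }
  have hTb : ∀ u : O, ‖T u‖ ≤ (‖ι‖ / c) * ‖u‖ := by
    intro u
    have : ‖T u‖ = ‖k u‖ := rfl
    rw [this, div_mul_eq_mul_div, le_div_iff₀ hc]
    have := hbound u
    linarith [hbound u]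
  let Tc : O →L[ℝ] V := T.mkContinuous (‖ι‖ / c) hTb
  have hKcomp : K = (fun v : V => ι (v : X)) ∘ Tc := funext fun u => hKk u
  exact ⟨hklin, hcont, hsa, hKcomp ▸ hVcompact.comp_clm Tc⟩
end

section
/- Let ξ ∈ ℝ³ with ξ ≠ 0 and let a be a symmetric 3×3 real matrix. Then the following are equivalent: (i) vᵀ a w = 0 for all v, w ∈ ℝ³ with v·ξ = 0 and w·ξ = 0; (ii) there exists b ∈ ℝ³ with a = b ξᵀ + ξ bᵀ. Moreover, the vector b in (ii) is unique. -/
/-!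
Pick any `η` with `ξ ⬝ᵥ η = 1`. Then `x ↦ x - (ξ ⬝ᵥ x) • η` projects onto `ξᗮ`, and expanding the
vanishing of `a` on projected vectors gives `a = b ξᵀ + ξ bᵀ` with `b = a η - (ηᵀ a η / 2) ξ`.
Conversely `b ξᵀ + ξ bᵀ` visibly vanishes on `ξᗮ × ξᗮ`. For uniqueness, if `c ξᵀ + ξ cᵀ = 0` then
applying it to `η` gives `c = -(c ⬝ᵥ η) ξ`, and pairing with `η` gives `2 (c ⬝ᵥ η) = 0`.
-/

open Matrix

namespace Matrix

variable {K n : Type*} [Fintype n]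

theorem ext_of_dotProduct_mulVec [CommSemiring K] [DecidableEq n] {A B : Matrix n n K}
    (h : ∀ v w, v ⬝ᵥ (A *ᵥ w) = v ⬝ᵥ (B *ᵥ w)) : A = B := by
  ext i j
  simpa [mulVec_single, single_dotProduct] using h (Pi.single i 1) (Pi.single j 1)

theorem exists_dotProduct_eq_one [Field K] [DecidableEq n] {ξ : n → K} (hξ : ξ ≠ 0) :
    ∃ η, ξ ⬝ᵥ η = 1 := by
  obtain ⟨k, hk⟩ := Function.ne_iff.mp hξ
  exact ⟨Pi.single k (ξ k)⁻¹, by rw [dotProduct_single]; exact mul_inv_cancel₀ hk⟩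

theorem dotProduct_vecMulVec_add_mulVec [CommSemiring K] (b ξ v w : n → K) :
    v ⬝ᵥ ((vecMulVec b ξ + vecMulVec ξ b) *ᵥ w) = (v ⬝ᵥ b) * (ξ ⬝ᵥ w) + (v ⬝ᵥ ξ) * (b ⬝ᵥ w) := by
  simp only [add_mulVec, vecMulVec_mulVec, dotProduct_add, op_smul_eq_smul, dotProduct_smul,
    smul_eq_mul]
  ring

theorem dotProduct_vecMulVec_add_mulVec_eq_zero [CommSemiring K] {ξ b v w : n → K}
    (hv : v ⬝ᵥ ξ = 0) (hw : w ⬝ᵥ ξ = 0) :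
    v ⬝ᵥ ((vecMulVec b ξ + vecMulVec ξ b) *ᵥ w) = 0 := by
  rw [dotProduct_vecMulVec_add_mulVec, dotProduct_comm ξ, hv, hw]
  ring

theorem eq_of_vecMulVec_add_eq [Field K] {ξ η b b' : n → K} (h2 : (2 : K) ≠ 0)
    (hη : ξ ⬝ᵥ η = 1) (h : vecMulVec b ξ + vecMulVec ξ b = vecMulVec b' ξ + vecMulVec ξ b') :
    b = b' := by
  set c := b - b'
  have hc : vecMulVec c ξ + vecMulVec ξ c = 0 := by
    rw [sub_vecMulVec, vecMulVec_sub, sub_add_sub_comm, h, sub_self]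
  have hcη : c + (c ⬝ᵥ η) • ξ = 0 := by
    simpa [add_mulVec, vecMulVec_mulVec, hη, add_comm] using congrArg (· *ᵥ η) hc
  have h2cη : 2 * (c ⬝ᵥ η) = 0 := by
    have := congrArg (· ⬝ᵥ η) hcη
    simp only [add_dotProduct, smul_dotProduct, hη, smul_eq_mul, zero_dotProduct] at this
    linear_combination this
  have hcη0 : c ⬝ᵥ η = 0 := (mul_eq_zero.mp h2cη).resolve_left h2
  exact sub_eq_zero.mp (by simpa [hcη0] using hcη)

theorem eq_vecMulVec_add_of_dotProduct_mulVec_eq_zero [Field K] [DecidableEq n]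
    {ξ η : n → K} {a : Matrix n n K} (h2 : (2 : K) ≠ 0) (hη : ξ ⬝ᵥ η = 1) (ha : aᵀ = a)
    (h : ∀ v w, v ⬝ᵥ ξ = 0 → w ⬝ᵥ ξ = 0 → v ⬝ᵥ (a *ᵥ w) = 0) :
    a = vecMulVec (a *ᵥ η - ((η ⬝ᵥ (a *ᵥ η)) / 2) • ξ) ξ
      + vecMulVec ξ (a *ᵥ η - ((η ⬝ᵥ (a *ᵥ η)) / 2) • ξ) := by
  have hproj : ∀ x, (x - (ξ ⬝ᵥ x) • η) ⬝ᵥ ξ = 0 := fun x => by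
    simp [dotProduct_comm _ ξ, hη]
  refine ext_of_dotProduct_mulVec fun v w => ?_
  have hsymm : η ⬝ᵥ (a *ᵥ w) = (a *ᵥ η) ⬝ᵥ w := by
    rw [dotProduct_mulVec, ← mulVec_transpose, ha]
  have hvw := h _ _ (hproj v) (hproj w)
  simp only [mulVec_sub, mulVec_smul, dotProduct_sub, sub_dotProduct, dotProduct_smul,
    smul_dotProduct, smul_eq_mul, hsymm] at hvw
  rw [dotProduct_vecMulVec_add_mulVec]
  simp only [dotProduct_sub, sub_dotProduct, dotProduct_smul, smul_dotProduct, smul_eq_mul,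
    dotProduct_comm v ξ]
  linear_combination hvw + (η ⬝ᵥ (a *ᵥ η)) * (ξ ⬝ᵥ v) * (ξ ⬝ᵥ w) * inv_mul_cancel₀ h2

end Matrix

/-- For `ξ ≠ 0` and a symmetric `3×3` matrix `a`: the quadratic form of
`a` vanishes on the orthogonal complement of `ξ` iff `a = b ξᵀ + ξ bᵀ` for some `b`;
moreover such a `b` is unique. -/
theorem stmt_8 (ξ : Fin 3 → ℝ) (hξ : ξ ≠ 0)
    (a : Matrix (Fin 3) (Fin 3) ℝ) (ha : aᵀ = a) :
    ((∀ v w : Fin 3 → ℝ, v ⬝ᵥ ξ = 0 → w ⬝ᵥ ξ = 0 → v ⬝ᵥ (a *ᵥ w) = 0) ↔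
      ∃ b : Fin 3 → ℝ, a = vecMulVec b ξ + vecMulVec ξ b) ∧
    (∀ b b' : Fin 3 → ℝ, a = vecMulVec b ξ + vecMulVec ξ b →
      a = vecMulVec b' ξ + vecMulVec ξ b' → b = b') := by
  obtain ⟨η, hη⟩ := exists_dotProduct_eq_one hξ
  refine ⟨⟨fun h => ⟨_, eq_vecMulVec_add_of_dotProduct_mulVec_eq_zero two_ne_zero hη ha h⟩, ?_⟩, ?_⟩
  · rintro ⟨b, rfl⟩ v w hv hw
    exact dotProduct_vecMulVec_add_mulVec_eq_zero hv hw
  · intro b b' hb hb'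
    exact eq_of_vecMulVec_add_eq two_ne_zero hη (hb.symm.trans hb')
end

section
/- Let u be a symmetric 3×3 real matrix and let t ∈ ℝ³ be a unit vector. Suppose (m₀, n₀, t) and (m₁, n₁, t) are both right-handed orthonormal bases of ℝ³. Then the matrix Skew(n₁) u Skew(m₁) − Skew(n₀) u Skew(m₀) is symmetric. -/
/-!
An alternating bilinear map `B` on `R³` factors through the cross product, since
`B v w = ∑_{i<j} (v_i w_j - v_j w_i) B eᵢ eⱼ`. Because `Skew` is skew-symmetric and `u` is
symmetric, the antisymmetric part `Skew n * u * Skew m - (Skew n * u * Skew m)ᵀ` is such a map of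
`(m, n)`, so it takes the same value on `(m₀, n₀)` and `(m₁, n₁)`, both having cross product `t`.
That equality of antisymmetric parts is exactly the symmetry of the difference.
-/

open Matrix

theorem LinearMap.IsAlt.apply_eq_cross {R M : Type*} [CommRing R] [AddCommGroup M] [Module R M]
    {B : (Fin 3 → R) →ₗ[R] (Fin 3 → R) →ₗ[R] M} (hB : B.IsAlt) (v w : Fin 3 → R) :
    B v w = (v ⨯₃ w) 0 • B (Pi.single 1 1) (Pi.single 2 1)
      + (v ⨯₃ w) 1 • B (Pi.single 2 1) (Pi.single 0 1)
      + (v ⨯₃ w) 2 • B (Pi.single 0 1) (Pi.single 1 1) := by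
  conv_lhs => rw [pi_eq_sum_univ' v, pi_eq_sum_univ' w]
  simp only [Fin.sum_univ_three, map_add, map_smul, LinearMap.add_apply, LinearMap.smul_apply,
    hB.self_eq_zero, ← hB.neg (Pi.single 1 (1 : R)) (Pi.single 2 1),
    ← hB.neg (Pi.single 2 (1 : R)) (Pi.single 0 1), ← hB.neg (Pi.single 0 (1 : R)) (Pi.single 1 1),
    cross_apply, cons_val]
  module

theorem LinearMap.IsAlt.apply_eq_of_cross_eq {R M : Type*} [CommRing R] [AddCommGroup M]
    [Module R M] {B : (Fin 3 → R) →ₗ[R] (Fin 3 → R) →ₗ[R] M} (hB : B.IsAlt)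
    {v w v' w' : Fin 3 → R} (h : v ⨯₃ w = v' ⨯₃ w') : B v w = B v' w' := by
  rw [hB.apply_eq_cross v w, hB.apply_eq_cross v' w', h]

section CrossProductMatrix

variable {R : Type*} [CommRing R]

def crossProductMatrix : (Fin 3 → R) →ₗ[R] Matrix (Fin 3) (Fin 3) R :=
  LinearMap.toMatrix'.toLinearMap ∘ₗ crossProduct

theorem eq_crossProductMatrix_of_mulVec {A : Matrix (Fin 3) (Fin 3) R} {v : Fin 3 → R}
    (h : ∀ w, A *ᵥ w = v ⨯₃ w) : A = crossProductMatrix v := by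
  ext1 i j
  simp [crossProductMatrix, LinearMap.toMatrix'_apply, ← h]

theorem transpose_crossProductMatrix (v : Fin 3 → R) :
    (crossProductMatrix v)ᵀ = -crossProductMatrix v := by
  ext i j
  fin_cases i <;> fin_cases j <;> simp [crossProductMatrix, LinearMap.toMatrix'_apply, cross_apply]

end CrossProductMatrix

section SandwichSkewPart

variable {R V n : Type*} [CommRing R] [AddCommGroup V] [Module R V] [Fintype n]

def sandwichSkewPart (S : V →ₗ[R] Matrix n n R) (u : Matrix n n R) :
    V →ₗ[R] V →ₗ[R] Matrix n n R :=
  LinearMap.mk₂ R (fun a b => S b * u * S a - (S b * u * S a)ᵀ)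
    (fun a a' b => by simp only [map_add, mul_add, transpose_add]; abel)
    (fun c a b => by simp only [map_smul, mul_smul_comm, transpose_smul, smul_sub])
    (fun a b b' => by simp only [map_add, add_mul, transpose_add]; abel)
    (fun c a b => by simp only [map_smul, smul_mul_assoc, transpose_smul, smul_sub])

theorem isAlt_sandwichSkewPart {S : V →ₗ[R] Matrix n n R} {u : Matrix n n R}
    (hS : ∀ v, (S v)ᵀ = -S v) (hu : uᵀ = u) : (sandwichSkewPart S u).IsAlt := fun v => by
  simp [sandwichSkewPart, transpose_mul, hS, hu, Matrix.mul_assoc]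

end SandwichSkewPart

theorem stmt_12_general (Skew : (Fin 3 → ℝ) → Matrix (Fin 3) (Fin 3) ℝ)
    (hSkew : ∀ v w : Fin 3 → ℝ, (Skew v) *ᵥ w = crossProduct v w)
    (u : Matrix (Fin 3) (Fin 3) ℝ) (hu : uᵀ = u)
    (t m₀ n₀ m₁ n₁ : Fin 3 → ℝ)
    (hc₀ : crossProduct m₀ n₀ = t)
    (hc₁ : crossProduct m₁ n₁ = t) :
    (Skew n₁ * u * Skew m₁ - Skew n₀ * u * Skew m₀)ᵀ =
      Skew n₁ * u * Skew m₁ - Skew n₀ * u * Skew m₀ := by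
  obtain rfl : Skew = crossProductMatrix :=
    funext fun v => eq_crossProductMatrix_of_mulVec (hSkew v)
  have hB := isAlt_sandwichSkewPart transpose_crossProductMatrix hu
  have h : sandwichSkewPart crossProductMatrix u m₁ n₁ =
      sandwichSkewPart crossProductMatrix u m₀ n₀ :=
    hB.apply_eq_of_cross_eq (hc₁.trans hc₀.symm)
  rw [transpose_sub]
  exact (sub_eq_sub_iff_sub_eq_sub.mp h).symm

/-- For a symmetric matrix `u` and two right-handed orthonormal bases
`(m₀, n₀, t)` and `(m₁, n₁, t)` sharing the third vector `t`, the matrix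
`Skew(n₁) u Skew(m₁) − Skew(n₀) u Skew(m₀)` is symmetric. -/
theorem stmt_12 (Skew : (Fin 3 → ℝ) → Matrix (Fin 3) (Fin 3) ℝ)
    (hSkew : ∀ v w : Fin 3 → ℝ, (Skew v) *ᵥ w = crossProduct v w)
    (u : Matrix (Fin 3) (Fin 3) ℝ) (hu : uᵀ = u)
    (t m₀ n₀ m₁ n₁ : Fin 3 → ℝ) (ht : t ⬝ᵥ t = 1)
    (hm₀ : m₀ ⬝ᵥ m₀ = 1) (hn₀ : n₀ ⬝ᵥ n₀ = 1)
    (hm₀n₀ : m₀ ⬝ᵥ n₀ = 0) (hm₀t : m₀ ⬝ᵥ t = 0) (hn₀t : n₀ ⬝ᵥ t = 0)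
    (hc₀ : crossProduct m₀ n₀ = t)
    (hm₁ : m₁ ⬝ᵥ m₁ = 1) (hn₁ : n₁ ⬝ᵥ n₁ = 1)
    (hm₁n₁ : m₁ ⬝ᵥ n₁ = 0) (hm₁t : m₁ ⬝ᵥ t = 0) (hn₁t : n₁ ⬝ᵥ t = 0)
    (hc₁ : crossProduct m₁ n₁ = t) :
    (Skew n₁ * u * Skew m₁ - Skew n₀ * u * Skew m₀)ᵀ =
      Skew n₁ * u * Skew m₁ - Skew n₀ * u * Skew m₀ :=
  stmt_12_general Skew hSkew u hu t m₀ n₀ m₁ n₁ hc₀ hc₁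
end

section
/- Let (m, n, t) be a right-handed orthonormal basis of ℝ³, and let J be a symmetric 3×3 real matrix such that vᵀ J w = 0 for all v, w ∈ ℝ³ orthogonal to n. Then there exists α ∈ ℝ³ such that Skew(n) J Skew(m) = α tᵀ and α·t = mᵀ J n; in particular tr(Skew(n) J Skew(m)) = mᵀ J n. -/
open Matrix

private lemma mul_vmv (A : Matrix (Fin 3) (Fin 3) ℝ) (v w : Fin 3 → ℝ) :
    A * vecMulVec v w = vecMulVec (A *ᵥ v) w := by
  ext i j
  simp only [vecMulVec_apply, Matrix.mul_apply, Matrix.mulVec, dotProduct, Finset.sum_mul]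
  exact Finset.sum_congr rfl fun k _ => by ring

private lemma vmv_mul (A : Matrix (Fin 3) (Fin 3) ℝ) (v w : Fin 3 → ℝ) :
    vecMulVec v w * A = vecMulVec v (w ᵥ* A) := by
  ext i j
  simp only [vecMulVec_apply, Matrix.mul_apply, Matrix.vecMul, dotProduct, Finset.mul_sum]
  exact Finset.sum_congr rfl fun k _ => by ring

private lemma vmv_mul_vmv (v w x y : Fin 3 → ℝ) :
    vecMulVec v w * vecMulVec x y = (w ⬝ᵥ x) • vecMulVec v y := by
  ext i j
  simp only [vecMulVec_apply, Matrix.mul_apply, Matrix.smul_apply, dotProduct,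
    Finset.sum_mul, smul_eq_mul, Finset.mul_sum]
  exact Finset.sum_congr rfl fun k _ => by ring

/-- For a right-handed orthonormal basis `(m, n, t)` and a symmetric
matrix `J` whose associated bilinear form vanishes on the orthogonal complement of `n`,
there is `α ∈ ℝ³` with `Skew(n) J Skew(m) = α tᵀ` and `α ⬝ t = mᵀ J n`; in particular
`tr (Skew(n) J Skew(m)) = mᵀ J n`. -/
theorem stmt_13 (Skew : (Fin 3 → ℝ) → Matrix (Fin 3) (Fin 3) ℝ)
    (hSkew : ∀ v w : Fin 3 → ℝ, (Skew v) *ᵥ w = crossProduct v w)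
    (m n t : Fin 3 → ℝ)
    (hm : m ⬝ᵥ m = 1) (hn : n ⬝ᵥ n = 1) (ht : t ⬝ᵥ t = 1)
    (hmn : m ⬝ᵥ n = 0) (hmt : m ⬝ᵥ t = 0) (hnt : n ⬝ᵥ t = 0)
    (hcross : crossProduct m n = t)
    (J : Matrix (Fin 3) (Fin 3) ℝ) (hJ : Jᵀ = J)
    (hJn : ∀ v w : Fin 3 → ℝ, v ⬝ᵥ n = 0 → w ⬝ᵥ n = 0 → v ⬝ᵥ (J *ᵥ w) = 0) :
    ∃ α : Fin 3 → ℝ, Skew n * J * Skew m = vecMulVec α t ∧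
      α ⬝ᵥ t = m ⬝ᵥ (J *ᵥ n) ∧
      Matrix.trace (Skew n * J * Skew m) = m ⬝ᵥ (J *ᵥ n) := by
  -- explicit form of the skew matrices
  have hSkewE : ∀ v : Fin 3 → ℝ,
      Skew v = !![0, -v 2, v 1; v 2, 0, -v 0; -v 1, v 0, 0] := by
    intro v
    ext i j
    have h := congrFun (hSkew v (Pi.single j 1)) i
    rw [Matrix.mulVec_single] at h
    fin_cases i <;> fin_cases j <;>
      simp [cross_apply] at h ⊢ <;> linarith
  have hvm : ∀ v w : Fin 3 → ℝ, w ᵥ* Skew v = crossProduct w v := by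
    intro v w
    rw [hSkewE v]
    ext j
    fin_cases j <;>
      simp [Matrix.vecMul, dotProduct, Fin.sum_univ_three, cross_apply] <;> ring
  -- expanded orthonormality facts
  have hm' : m 0 * m 0 + m 1 * m 1 + m 2 * m 2 = 1 := by
    simpa [dotProduct, Fin.sum_univ_three] using hm
  have hn' : n 0 * n 0 + n 1 * n 1 + n 2 * n 2 = 1 := by
    simpa [dotProduct, Fin.sum_univ_three] using hn
  have ht' : t 0 * t 0 + t 1 * t 1 + t 2 * t 2 = 1 := by
    simpa [dotProduct, Fin.sum_univ_three] using ht
  have hmn' : m 0 * n 0 + m 1 * n 1 + m 2 * n 2 = 0 := by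
    simpa [dotProduct, Fin.sum_univ_three] using hmn
  have hmt' : m 0 * t 0 + m 1 * t 1 + m 2 * t 2 = 0 := by
    simpa [dotProduct, Fin.sum_univ_three] using hmt
  have hnt' : n 0 * t 0 + n 1 * t 1 + n 2 * t 2 = 0 := by
    simpa [dotProduct, Fin.sum_univ_three] using hnt
  -- the matrix with rows m, n, t is orthogonal
  set Q : Matrix (Fin 3) (Fin 3) ℝ := Matrix.of ![m, n, t] with hQdef
  have hQ : Q * Qᵀ = 1 := by
    ext i j
    fin_cases i <;> fin_cases j <;>
      simp only [hQdef, Matrix.mul_apply, Matrix.transpose_apply, Fin.sum_univ_three,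
        Matrix.of_apply, Matrix.cons_val_zero, Matrix.cons_val_one, Matrix.head_cons,
        Matrix.cons_val_two, Matrix.tail_cons, Fin.isValue, Fin.reduceFinMk, Matrix.one_apply,
        Fin.mk_zero, Fin.mk_one, if_true, if_false, Fin.reduceEq, reduceIte] <;>
      first
        | linear_combination hm' | linear_combination hn' | linear_combination ht'
        | linear_combination hmn' | linear_combination hmt' | linear_combination hnt'
  have hQ1 : Qᵀ * Q = 1 := mul_eq_one_comm.mp hQ
  -- completeness relation
  have hP : vecMulVec m m + vecMulVec n n + vecMulVec t t = (1 : Matrix (Fin 3) (Fin 3) ℝ) := by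
    rw [← hQ1]
    ext i j
    simp only [hQdef, Matrix.add_apply, vecMulVec_apply, Matrix.mul_apply,
      Matrix.transpose_apply, Fin.sum_univ_three, Matrix.of_apply, Matrix.cons_val_zero,
      Matrix.cons_val_one, Matrix.head_cons, Matrix.cons_val_two, Matrix.tail_cons]
  -- bilinear form coefficients
  have htn : t ⬝ᵥ n = 0 := by rw [dotProduct_comm]; exact hnt
  have hJmm : m ⬝ᵥ (J *ᵥ m) = 0 := hJn m m hmn hmn
  have hJmt : m ⬝ᵥ (J *ᵥ t) = 0 := hJn m t hmn htn
  have hJtm : t ⬝ᵥ (J *ᵥ m) = 0 := hJn t m htn hmn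
  have hJtt : t ⬝ᵥ (J *ᵥ t) = 0 := hJn t t htn htn
  have hsymm : ∀ v w : Fin 3 → ℝ, v ⬝ᵥ (J *ᵥ w) = w ⬝ᵥ (J *ᵥ v) := by
    intro v w
    rw [dotProduct_mulVec, ← hJ, Matrix.vecMul_transpose, dotProduct_comm, hJ]
  set a := n ⬝ᵥ (J *ᵥ n) with ha
  set b := m ⬝ᵥ (J *ᵥ n) with hb
  set c := t ⬝ᵥ (J *ᵥ n) with hc
  have hJnm : n ⬝ᵥ (J *ᵥ m) = b := by rw [hsymm n m]
  have hJnt : n ⬝ᵥ (J *ᵥ t) = c := by rw [hsymm n t]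
  -- decomposition of J
  have e1 : ∀ u u' : Fin 3 → ℝ,
      vecMulVec u u * J * vecMulVec u' u' = (u ⬝ᵥ (J *ᵥ u')) • vecMulVec u u' := by
    intro u u'
    rw [vmv_mul, vmv_mul_vmv, ← dotProduct_mulVec]
  have hJdec : J = b • vecMulVec m n + b • vecMulVec n m + c • vecMulVec t n +
      c • vecMulVec n t + a • vecMulVec n n := by
    have h1 : J = (vecMulVec m m + vecMulVec n n + vecMulVec t t) * J *
        (vecMulVec m m + vecMulVec n n + vecMulVec t t) := by rw [hP, one_mul, mul_one]
    rw [h1]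
    simp only [add_mul, mul_add, e1]
    rw [hJmm, hJmt, hJtm, hJtt, hJnm, hJnt, ← ha, ← hb, ← hc]
    simp only [zero_smul, add_zero, zero_add]
    abel
  -- the key matrix identity
  have hnm2 : crossProduct n m = -t := by rw [← cross_anticomm, hcross]
  have key : Skew n * J * Skew m = vecMulVec (b • t - c • crossProduct n t) t := by
    have hterm : ∀ (r : ℝ) (v w : Fin 3 → ℝ), Skew n * (r • vecMulVec v w) * Skew m
        = r • vecMulVec (crossProduct n v) (crossProduct w m) := by
      intro r v w
      rw [Matrix.mul_smul, Matrix.smul_mul, mul_vmv, vmv_mul, hSkew, hvm]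
    rw [hJdec]
    simp only [mul_add, add_mul, hterm, cross_self, hnm2, hcross]
    ext i j
    simp [vecMulVec_apply]
    ring
  have hdot : (b • t - c • crossProduct n t) ⬝ᵥ t = b := by
    simp only [dotProduct, Fin.sum_univ_three, Pi.sub_apply, Pi.smul_apply, smul_eq_mul,
      cross_apply]
    simp only [Matrix.cons_val_zero, Matrix.cons_val_one, Matrix.head_cons,
      Matrix.cons_val_two, Matrix.tail_cons]
    linear_combination b * ht'
  refine ⟨b • t - c • crossProduct n t, key, hdot, ?_⟩
  rw [key]
  have : Matrix.trace (vecMulVec (b • t - c • crossProduct n t) t)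
      = (b • t - c • crossProduct n t) ⬝ᵥ t := by
    simp [Matrix.trace, Matrix.diag, vecMulVec_apply, dotProduct, Fin.sum_univ_three]
    try ring
  rw [this, hdot]
end
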